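/- arXiv:2012.05327 — 4 statements merged into one kernel-verified Lean document; each statement's English description precedes it below -/
import Mathlib

section
/- Let K ⊆ L be a field extension, V a K-vector space, and v₀, v₁, …, vₙ ∈ V. Let h₁, …, hₙ ∈ L be linearly independent over K. If in the L-vector space L ⊗_K V we have ∑ᵢ hᵢ ⊗ vᵢ = γ ⊗ v₀ for some γ ∈ L, then the K-span of v₁, …, vₙ has dimension at most 1. -/
open TensorProduct

theorem LinearIndependent.exists_linearMap_apply_eq_ite {K M ι : Type*} [Field K]
    [AddCommGroup M] [Module K M] [DecidableEq ι] {h : ι → M} (hh : LinearIndependent K h)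
    (i : ι) : ∃ f : M →ₗ[K] K, ∀ j, f (h j) = if j = i then 1 else 0 := by
  obtain ⟨f, hf⟩ := LinearMap.exists_extend (Finsupp.lapply i ∘ₗ hh.repr)
  refine ⟨f, fun j => ?_⟩
  have hj : h j ∈ Submodule.span K (Set.range h) := Submodule.subset_span ⟨j, rfl⟩
  simpa [hh.repr_eq_single j ⟨h j, hj⟩ rfl, Finsupp.single_apply] using
    LinearMap.congr_fun hf ⟨h j, hj⟩

theorem mem_span_singleton_of_sum_tmul_eq_tmul {K M V ι : Type*} [Field K]
    [AddCommGroup M] [Module K M] [AddCommGroup V] [Module K V] [Fintype ι]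
    {h : ι → M} (hh : LinearIndependent K h) {v : ι → V} {m : M} {v₀ : V}
    (heq : ∑ j, h j ⊗ₜ[K] v j = m ⊗ₜ[K] v₀) (i : ι) : v i ∈ Submodule.span K {v₀} := by
  classical
  obtain ⟨f, hf⟩ := hh.exists_linearMap_apply_eq_ite i
  -- `f ⊗ id` picks out the `i`-th summand on the left.
  have := congrArg ((TensorProduct.lid K V).toLinearMap ∘ₗ f.rTensor V) heq
  simp only [map_sum, LinearMap.comp_apply, LinearMap.rTensor_tmul, LinearEquiv.coe_coe,
    TensorProduct.lid_tmul, hf, ite_smul, one_smul, zero_smul, Finset.sum_ite_eq',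
    Finset.mem_univ, if_true] at this
  exact Submodule.mem_span_singleton.2 ⟨f m, this.symm⟩

theorem stmt0 {K L V : Type*} [Field K] [Field L] [Algebra K L]
    [AddCommGroup V] [Module K V] {n : ℕ}
    (h : Fin n → L) (hindep : LinearIndependent K h)
    (v₀ : V) (v : Fin n → V) (γ : L)
    (heq : (∑ i, h i ⊗ₜ[K] v i) = γ ⊗ₜ[K] v₀) :
    Module.rank K (Submodule.span K (Set.range v)) ≤ 1 := by
  have hle : Submodule.span K (Set.range v) ≤ Submodule.span K {v₀} :=
    Submodule.span_le.2 <| Set.range_subset_iff.2 <|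
      mem_span_singleton_of_sum_tmul_eq_tmul hindep heq
  calc Module.rank K (Submodule.span K (Set.range v))
      ≤ Module.rank K (Submodule.span K {v₀}) := Submodule.rank_mono hle
    _ ≤ Cardinal.mk ({v₀} : Set V) := rank_span_le _
    _ = 1 := Cardinal.mk_singleton _
end

section
/- Let K ⊆ L be a field extension and h₀, h₁, …, hₙ ∈ L linearly independent over K. Suppose γ ∈ L satisfies γ⁻¹ = ∑ᵢ₌₀ⁿ rᵢhᵢ with rᵢ ∈ K and r₀ ≠ 0. Then for any e₁, …, eₙ ∈ K, the elements e₁ + γh₁, …, eₙ + γhₙ of L are linearly independent over K. -/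
/-
Dividing by γ, the family becomes `e i • γ⁻¹ + h (i+1)`, and γ⁻¹ is a combination of the `h j`
whose coefficient at `h 0` is nonzero. In a relation `∑ cᵢ (eᵢ γ⁻¹ + h_{i+1}) = 0` the only
contribution to `h 0` is `(∑ cᵢ eᵢ) r₀`, so `∑ cᵢ eᵢ = 0`, and what remains is a relation among
`h 1, …, h n`.
-/

theorem LinearIndependent.smul_sum_add_succ {R M : Type*} [Ring R] [NoZeroDivisors R]
    [AddCommGroup M] [Module R M] {n : ℕ} {v : Fin (n + 1) → M} (hv : LinearIndependent R v)
    {r : Fin (n + 1) → R} (hr0 : r 0 ≠ 0) (a : Fin n → R) :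
    LinearIndependent R (fun i : Fin n => a i • ∑ j, r j • v j + v i.succ) := by
  rw [Fintype.linearIndependent_iff] at hv ⊢
  intro c hc
  set S := ∑ i, c i * a i
  have hrel : ∑ j, (S * r j + Fin.cases 0 c j) • v j = 0 := by
    calc ∑ j, (S * r j + Fin.cases 0 c j) • v j
        = S • ∑ j, r j • v j + ∑ i, c i • v i.succ := by
          simp only [add_smul, Finset.sum_add_distrib]
          congr 1
          · simp only [mul_smul, Finset.smul_sum]
          · simp [Fin.sum_univ_succ]
      _ = ∑ i, c i • (a i • ∑ j, r j • v j + v i.succ) := by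
          simp only [smul_add, Finset.sum_add_distrib, smul_smul, S, Finset.sum_smul]
      _ = 0 := hc
  have hS : S = 0 := by
    simpa [hr0] using hv _ hrel 0
  intro i
  simpa [hS] using hv _ hrel i.succ

theorem stmt1 {K L : Type*} [Field K] [Field L] [Algebra K L] {n : ℕ}
    (h : Fin (n + 1) → L) (hindep : LinearIndependent K h)
    (r : Fin (n + 1) → K) (hr0 : r 0 ≠ 0) (γ : L)
    (hγ : γ⁻¹ = ∑ i, algebraMap K L (r i) * h i)
    (e : Fin n → K) :
    LinearIndependent K (fun i : Fin n => algebraMap K L (e i) + γ * h i.succ) := by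
  simp only [← Algebra.smul_def] at hγ
  have hγ0 : γ ≠ 0 := by
    rintro rfl
    rw [inv_zero, eq_comm] at hγ
    exact hr0 (Fintype.linearIndependent_iff.mp hindep r hγ 0)
  have hfamily : (fun i : Fin n => algebraMap K L (e i) + γ * h i.succ) =
      LinearMap.mulLeft K γ ∘ fun i => e i • γ⁻¹ + h i.succ := by
    funext i
    simp [Algebra.smul_def, mul_add, mul_left_comm γ, hγ0]
  rw [hfamily, hγ]
  exact (hindep.smul_sum_add_succ hr0 e).map' _
    (LinearMap.ker_eq_bot.mpr (mul_right_injective₀ hγ0))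
end

section
/- Let K ⊆ L be a field extension, h₀, …, hₙ ∈ L linearly independent over K, and r₀, …, rₙ ∈ K with r₀ ≠ 0. Then γ := (∑ᵢ₌₀ⁿ rᵢhᵢ)⁻¹ is well-defined (i.e. ∑ rᵢhᵢ ≠ 0), and for any e₁, …, eₙ ∈ K and s₁, …, sₙ ∈ K, the equation ∑ᵢ₌₁ⁿ sᵢ(eᵢ + γhᵢ) = 0 implies s₁ = ⋯ = sₙ = 0. -/
/-!
Write `D = ∑ rᵢ hᵢ`. Multiplying the relation by `D` turns it into the `K`-linear relation
`T • D + ∑ sᵢ • hᵢ₊₁ = 0` with `T = ∑ sᵢ eᵢ ∈ K`. Since `r₀ ≠ 0`, the family `D, h₁, …, hₙ` is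
still `K`-linearly independent (so in particular `D ≠ 0`), hence `T = 0` and every `sᵢ = 0`.
-/

open Submodule in
theorem LinearIndependent.finCons_sum_smul_tail {K V : Type*} [DivisionRing K] [AddCommGroup V]
    [Module K V] {n : ℕ} {h : Fin (n + 1) → V} (hh : LinearIndependent K h)
    {r : Fin (n + 1) → K} (hr : r 0 ≠ 0) :
    LinearIndependent K (Fin.cons (∑ j, r j • h j) (Fin.tail h) : Fin (n + 1) → V) := by
  rw [← Fin.cons_self_tail h, linearIndependent_finCons] at hh
  obtain ⟨htail, h0⟩ := hh
  refine linearIndependent_finCons.mpr ⟨htail, fun hmem => h0 ?_⟩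
  rw [Fin.sum_univ_succ] at hmem
  have htail_mem : ∑ j : Fin n, r j.succ • h j.succ ∈ span K (Set.range (Fin.tail h)) :=
    sum_mem fun j _ => smul_mem _ _ (subset_span ⟨j, rfl⟩)
  have hhead_mem := sub_mem hmem htail_mem
  rw [add_sub_cancel_right] at hhead_mem
  exact (smul_mem_iff _ hr).mp hhead_mem

theorem stmt5 {K L : Type*} [Field K] [Field L] [Algebra K L] {n : ℕ}
    (h : Fin (n + 1) → L) (hindep : LinearIndependent K h)
    (r : Fin (n + 1) → K) (hr0 : r 0 ≠ 0) :
    (∑ i, algebraMap K L (r i) * h i) ≠ 0 ∧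
      ∀ (e s : Fin n → K),
        (∑ i, algebraMap K L (s i) *
            (algebraMap K L (e i) + (∑ j, algebraMap K L (r j) * h j)⁻¹ * h i.succ)) = 0 →
        ∀ i, s i = 0 := by
  have hli := hindep.finCons_sum_smul_tail hr0
  simp only [Algebra.smul_def] at hli
  set D := ∑ j, algebraMap K L (r j) * h j
  have hD : D ≠ 0 := hli.ne_zero 0
  refine ⟨hD, fun e s hs => ?_⟩
  have hcleared : (∑ i, s i * e i) • D + ∑ i, s i • Fin.tail h i = 0 := by
    rw [← mul_zero D, ← hs]
    simp only [Algebra.smul_def, map_sum, map_mul, Finset.sum_mul, Finset.mul_sum,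
      ← Finset.sum_add_distrib, Fin.tail]
    refine Finset.sum_congr rfl fun i _ => ?_
    field_simp
  have hcoeff := Fintype.linearIndependent_iff.mp hli (Fin.cons (∑ i, s i * e i) s)
    (by rw [Fin.sum_univ_succ]; simpa [Algebra.smul_def] using hcleared)
  exact fun i => hcoeff i.succ
end

section
/- Let e₁, …, eₙ be rational numbers, let h₀, h₁, …, hₙ be real numbers that are linearly independent over the field ℚ(e₁, …, eₙ), and let t ∈ ℝ be such that t⁻¹ = ∑ᵢ₌₀ⁿ rᵢhᵢ with rᵢ ∈ ℚ(e₁, …, eₙ) and r₀ ≠ 0. Then the numbers e₁ + t h₁, …, eₙ + t hₙ are linearly independent over ℚ(e₁, …, eₙ). -/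
theorem stmt8 {n : ℕ} (e : Fin n → ℚ)
    (F : Subfield ℝ)
    (hF : F = Subfield.closure (Set.range fun i => ((e i : ℚ) : ℝ)))
    (h : Fin (n + 1) → ℝ) (hindep : LinearIndependent F h)
    (t : ℝ) (r : Fin (n + 1) → F) (hr0 : r 0 ≠ 0)
    (ht : t⁻¹ = ∑ i, (r i : ℝ) * h i) :
    LinearIndependent F (fun i : Fin n => ((e i : ℚ) : ℝ) + t * h i.succ) := by
  have heF : ∀ i, ((e i : ℚ) : ℝ) ∈ F := fun i => by
    rw [hF]; exact Subfield.subset_closure ⟨i, rfl⟩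
  rw [Fintype.linearIndependent_iff] at hindep ⊢
  have hsmul : ∀ (x : F) (y : ℝ), x • y = (x : ℝ) * y := fun x y => rfl
  have ht0 : t ≠ 0 := by
    intro h0
    apply hr0
    apply hindep r _ 0
    simp only [hsmul]
    rw [← ht, h0, inv_zero]
  intro g hg
  simp only [hsmul] at hg
  set S : ℝ := ∑ i, (g i : ℝ) * h i.succ with hS
  set a : F := ∑ i, g i * ⟨((e i : ℚ) : ℝ), heF i⟩ with ha
  have haR : (a : ℝ) = ∑ i, (g i : ℝ) * ((e i : ℚ) : ℝ) := by
    push_cast [ha]; rfl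
  have key : (a : ℝ) + t * S = 0 := by
    rw [haR, hS, Finset.mul_sum, ← Finset.sum_add_distrib, ← hg]
    congr 1; ext i; ring
  set c : Fin (n + 1) → F := fun j => a * r j + Fin.cases 0 g j with hc
  have hczero : ∀ j, c j = 0 := by
    apply hindep
    simp only [hsmul, hc]
    have : ∀ j : Fin (n+1), ((a * r j + Fin.cases 0 g j : F) : ℝ) * h j
        = (a : ℝ) * ((r j : ℝ) * h j) + ((Fin.cases 0 g j : F) : ℝ) * h j := by
      intro j; push_cast; ring
    rw [Finset.sum_congr rfl (fun j _ => this j), Finset.sum_add_distrib,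
      ← Finset.mul_sum, ← ht]
    rw [Fin.sum_univ_succ]
    simp only [Fin.cases_zero, Fin.cases_succ, ZeroMemClass.coe_zero, zero_mul, zero_add]
    have haS : (a : ℝ) = -(t * S) := by linarith [key]
    rw [haS, ← hS]
    field_simp
    ring
  have ha0 : a = 0 := by
    have := hczero 0
    simp only [hc, Fin.cases_zero, add_zero] at this
    rcases mul_eq_zero.mp this with h1 | h1
    · exact h1
    · exact absurd h1 hr0
  intro i
  have := hczero i.succ
  simp only [hc, Fin.cases_succ, ha0, zero_mul, zero_add] at this
  exact this
end
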